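/- arXiv:2009.04900 — 2 statements merged into one kernel-verified Lean document; each statement's English description precedes it below -/
import Mathlib

section
/- With R̄_L(x,y,z) = R_L(x,y,z) − 1, one has the identities of formal power series (1−xz+x)² · R̄_{U2}(x,y,z) = x(1−xz) · R̄_{UL_{S3}}(x,y,z) and (1−xz+x)² · R̄_{U3}(x,y,z) = x(1−xz) · R̄_{UL_{S3}}(x,y,z), where U2 is the set of Schröder paths with at least one U step that start with an H step and end with a D step, and U3 is the set of Schröder paths with at least one U step that start with a U step and end with an H step. -/
/-!
A Schröder path with a `U` step starts with `U` or `H` and ends with `D` or `H`; let `R_{hl}` be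
the generating function of those with first step `h` and last step `l`. Deleting a leading `H`
leaves a path starting with `U`, or with `H` and one horizontal run fewer, so
`(1 - xz) R_{Hl} = x R_{Ul}`; deleting a trailing `H` gives `(1 - xz) R_{UH} = x R_{UD}` in the
same way. Hence `R_{HD} = R_{UH}`, and with `(1 - xz) R_{HH} = x R_{UH}` the four classes add up to
`x (1 - xz) (R_{UD} + R_{HD} + R_{UH} + R_{HH}) = (1 - xz + x)^2 R_{HD}`.
-/

/-- A lattice path from `(0,0)` to `(2n,0)` with steps in `S` that never goes
below the x-axis, encoded as the list of its steps. -/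
def IsPath (S : Set (ℤ × ℤ)) (n : ℕ) (p : List (ℤ × ℤ)) : Prop :=
  (∀ s ∈ p, s ∈ S) ∧
  (p.map Prod.fst).sum = 2 * n ∧
  (p.map Prod.snd).sum = 0 ∧
  ∀ q : List (ℤ × ℤ), q <+: p → 0 ≤ (q.map Prod.snd).sum

def S1 : Set (ℤ × ℤ) := {(1, 1), (1, -1)}
def S2 : Set (ℤ × ℤ) := {s | ∃ r : ℤ, 0 < r ∧ (s = (r, r) ∨ s = (r, -r))}
def S3 : Set (ℤ × ℤ) := {(1, 1), (1, -1), (2, 0)}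
def S4 : Set (ℤ × ℤ) := {s | ∃ r : ℤ, 0 < r ∧ (s = (r, r) ∨ s = (r, -r) ∨ s = (2 * r, 0))}
def S5 : Set (ℤ × ℤ) := {s | s = (1, 1) ∨ s = (1, -1) ∨ ∃ r : ℤ, 0 < r ∧ s = (2 * r, 0)}
def S6 : Set (ℤ × ℤ) := {s | (∃ r : ℤ, 0 < r ∧ (s = (r, r) ∨ s = (r, -r))) ∨ s = (2, 0)}

/-- Number of runs: vertices lying between two consecutive steps of the same kind. -/
def runs (p : List (ℤ × ℤ)) : ℕ :=
  (p.zip p.tail).countP (fun q => q.1 == q.2)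

/-- Number of diagonal runs: vertices between two consecutive equal non-horizontal steps. -/
def dr (p : List (ℤ × ℤ)) : ℕ :=
  (p.zip p.tail).countP (fun q => q.1 == q.2 && q.1.2 != 0)

/-- Number of horizontal runs: vertices between two consecutive horizontal steps. -/
def hr (p : List (ℤ × ℤ)) : ℕ :=
  (p.zip p.tail).countP (fun q => q.1 == q.2 && q.1.2 == 0)

/-- The path has no horizontal step lying on the x-axis. -/
def NoFlatOnAxis (p : List (ℤ × ℤ)) : Prop :=
  ∀ q s, q ++ [s] <+: p → s.2 = 0 → (q.map Prod.snd).sum ≠ 0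

noncomputable def Xv : MvPowerSeries (Fin 3) ℚ := MvPowerSeries.X 0
noncomputable def Yv : MvPowerSeries (Fin 3) ℚ := MvPowerSeries.X 1
noncomputable def Zv : MvPowerSeries (Fin 3) ℚ := MvPowerSeries.X 2

/-- The monomial `x^n y^a z^b` as an exponent vector. -/
noncomputable def m3 (n a b : ℕ) : Fin 3 →₀ ℕ :=
  Finsupp.single (0 : Fin 3) n + Finsupp.single 1 a + Finsupp.single 2 b

noncomputable def Apoly : MvPowerSeries (Fin 3) ℚ := 1 - Xv * Zv
noncomputable def Bpoly : MvPowerSeries (Fin 3) ℚ := Xv + Yv * (1 - Xv * Zv)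
noncomputable def Cpoly : MvPowerSeries (Fin 3) ℚ := 1 - Xv * Zv + Xv
noncomputable def Delta : MvPowerSeries (Fin 3) ℚ :=
  Apoly ^ 4 - 2 * Xv * Apoly ^ 2 * (Bpoly ^ 2 + Cpoly ^ 2)
    + Xv ^ 2 * (Bpoly ^ 2 - Cpoly ^ 2) ^ 2

def U : ℤ × ℤ := (1, 1)
def D : ℤ × ℤ := (1, -1)

def Hstep : ℤ × ℤ := (2, 0)

lemma mem_S3 {s : ℤ × ℤ} : s ∈ S3 ↔ s = U ∨ s = D ∨ s = Hstep := Iff.rfl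

instance : Finite S3 := by unfold S3; infer_instance

namespace IsPath

variable {n : ℕ} {p : List (ℤ × ℤ)}

lemma length_le (hp : IsPath S3 n p) : p.length ≤ 2 * n := by
  have h := List.card_nsmul_le_sum (p.map Prod.fst) 1 (by
    simp only [List.mem_map]
    rintro _ ⟨s, hs, rfl⟩
    rcases mem_S3.1 (hp.1 s hs) with rfl | rfl | rfl <;> simp [U, D, Hstep])
  rw [hp.2.1] at h
  exact_mod_cast (by simpa using h : (p.length : ℤ) ≤ 2 * n)

lemma eq_nil_of_zero (hp : IsPath S3 0 p) : p = [] :=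
  List.eq_nil_of_length_eq_zero (Nat.le_zero.1 (by simpa using hp.length_le))

lemma head?_eq (hp : IsPath S3 n p) (hne : p ≠ []) :
    p.head? = some U ∨ p.head? = some Hstep := by
  obtain ⟨s, t, rfl⟩ := List.exists_cons_of_ne_nil hne
  have hfirst : 0 ≤ ([s].map Prod.snd).sum := hp.2.2.2 [s] ⟨t, rfl⟩
  rcases mem_S3.1 (hp.1 s (by simp)) with rfl | rfl | rfl <;> simp_all [D]

lemma getLast?_eq (hp : IsPath S3 n p) (hne : p ≠ []) :
    p.getLast? = some D ∨ p.getLast? = some Hstep := by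
  obtain ⟨q, s, rfl⟩ := (List.eq_nil_or_concat' p).resolve_left hne
  have hinit : 0 ≤ (q.map Prod.snd).sum := hp.2.2.2 q ⟨[s], rfl⟩
  have htotal := hp.2.2.1
  rcases mem_S3.1 (hp.1 s (by simp)) with rfl | rfl | rfl <;> simp_all [U]
  omega

end IsPath

lemma finite_setOf_isPath (n : ℕ) : {p | IsPath S3 n p}.Finite := by
  refine ((List.finite_length_le S3 (2 * n)).image (List.map Subtype.val)).subset ?_
  intro p hp
  have hlen := IsPath.length_le hp
  lift p to List S3 using hp.1
  exact ⟨p, by simpa using hlen, rfl⟩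

lemma isPath_cons_H_iff {n : ℕ} {q : List (ℤ × ℤ)} :
    IsPath S3 (n + 1) (Hstep :: q) ↔ IsPath S3 n q := by
  constructor
  · rintro ⟨hS, hfst, hsnd, hpre⟩
    refine ⟨fun s hs => hS s (List.mem_cons_of_mem _ hs), ?_, by simpa [Hstep] using hsnd,
      fun r hr => by simpa [Hstep] using hpre (Hstep :: r) (List.prefix_cons_inj _ |>.2 hr)⟩
    simp only [List.map_cons, List.sum_cons, Hstep] at hfst
    push_cast at hfst
    linarith
  · rintro ⟨hS, hfst, hsnd, hpre⟩
    refine ⟨List.forall_mem_cons.2 ⟨mem_S3.2 (by simp), hS⟩, ?_, by simp [Hstep, hsnd],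
      fun r hr => ?_⟩
    · simp only [List.map_cons, List.sum_cons, hfst, Hstep]
      push_cast
      ring
    · rcases List.prefix_cons_iff.1 hr with rfl | ⟨t, rfl, ht⟩
      · simp
      · simpa [Hstep] using hpre t ht

lemma isPath_append_H_iff {n : ℕ} {q : List (ℤ × ℤ)} :
    IsPath S3 (n + 1) (q ++ [Hstep]) ↔ IsPath S3 n q := by
  constructor
  · rintro ⟨hS, hfst, hsnd, hpre⟩
    refine ⟨fun s hs => hS s (List.mem_append_left _ hs), ?_, by simpa [Hstep] using hsnd,
      fun r hr => hpre r (hr.trans (List.prefix_append _ _))⟩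
    simp only [List.map_append, List.sum_append, List.map_cons, List.map_nil, List.sum_cons,
      List.sum_nil, Hstep] at hfst
    push_cast at hfst
    linarith
  · rintro ⟨hS, hfst, hsnd, hpre⟩
    refine ⟨List.forall_mem_append.2 ⟨hS, by simp [mem_S3]⟩, ?_, by simp [Hstep, hsnd],
      fun r hr => ?_⟩
    · simp only [List.map_append, List.sum_append, List.map_cons, List.map_nil, List.sum_cons,
        List.sum_nil, hfst, Hstep]
      push_cast
      ring
    · rcases List.prefix_concat_iff.1 hr with rfl | hr
      · simp [Hstep, hsnd]
      · exact hpre r hr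

lemma List.zip_tail_append_singleton {α : Type*} (l : List α) (x : α) :
    (l ++ [x]).zip (l ++ [x]).tail = l.zip l.tail ++ (l.getLast?.map (·, x)).toList := by
  induction l with
  | nil => rfl
  | cons a l ih =>
    cases l with
    | nil => rfl
    | cons b l => simpa using ih

lemma dr_cons_H (q : List (ℤ × ℤ)) : dr (Hstep :: q) = dr q := by
  cases q <;> simp [dr, Hstep]

lemma hr_cons_H (q : List (ℤ × ℤ)) :
    hr (Hstep :: q) = hr q + if q.head? = some Hstep then 1 else 0 := by
  cases q with
  | nil => rfl
  | cons y t =>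
    simp only [hr, List.tail_cons, List.zip_cons_cons, List.countP_cons, List.head?_cons,
      Option.some.injEq]
    simp [Hstep, eq_comm (a := y)]

lemma dr_append_H (q : List (ℤ × ℤ)) : dr (q ++ [Hstep]) = dr q := by
  rw [dr, List.zip_tail_append_singleton]
  rcases q.getLast? with _ | y <;> simp [dr, Hstep]
  rintro rfl
  rfl

lemma hr_append_H (q : List (ℤ × ℤ)) :
    hr (q ++ [Hstep]) = hr q + if q.getLast? = some Hstep then 1 else 0 := by
  rw [hr, List.zip_tail_append_singleton]
  rcases q.getLast? with _ | y <;> simp [hr, Hstep]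
  by_cases hy : y = (2, 0) <;> simp [hy]

section Monomials

@[simp] lemma m3_apply_zero (n a b : ℕ) : m3 n a b 0 = n := by simp [m3]
@[simp] lemma m3_apply_one (n a b : ℕ) : m3 n a b 1 = a := by simp [m3]
@[simp] lemma m3_apply_two (n a b : ℕ) : m3 n a b 2 = b := by simp [m3]

lemma m3_eval (d : Fin 3 →₀ ℕ) : m3 (d 0) (d 1) (d 2) = d := by
  ext i
  fin_cases i <;> simp

lemma m3_add_m3 (n a b n' a' b' : ℕ) :
    m3 n a b + m3 n' a' b' = m3 (n + n') (a + a') (b + b') := by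
  ext i
  fin_cases i <;> simp

lemma m3_le_m3 {n a b n' a' b' : ℕ} : m3 n a b ≤ m3 n' a' b' ↔ n ≤ n' ∧ a ≤ a' ∧ b ≤ b' := by
  simp [Finsupp.le_def, Fin.forall_fin_succ]

lemma Xv_mul_Zv_pow (k : ℕ) : Xv * Zv ^ k = MvPowerSeries.monomial (m3 1 0 k) 1 := by
  rw [Xv, Zv, MvPowerSeries.X, MvPowerSeries.X_pow_eq, MvPowerSeries.monomial_mul_monomial,
    one_mul, m3]
  simp

lemma eq_Xv_mul_Zv_pow_mul {F G : MvPowerSeries (Fin 3) ℚ} (k : ℕ)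
    (hzero : ∀ a b, MvPowerSeries.coeff (m3 0 a b) F = 0)
    (hlt : ∀ n a b, b < k → MvPowerSeries.coeff (m3 (n + 1) a b) F = 0)
    (hsucc : ∀ n a b,
      MvPowerSeries.coeff (m3 (n + 1) a (b + k)) F = MvPowerSeries.coeff (m3 n a b) G) :
    F = Xv * Zv ^ k * G := by
  ext d
  rw [← m3_eval d, Xv_mul_Zv_pow]
  generalize d 0 = n, d 1 = a, d 2 = b
  rcases n with _ | n
  · rw [hzero, MvPowerSeries.coeff_monomial_mul, if_neg (by simp [m3_le_m3])]
  obtain hb | ⟨b, rfl⟩ : b < k ∨ ∃ c, b = c + k := by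
    rcases lt_or_ge b k with hb | hb
    · exact .inl hb
    · exact .inr ⟨b - k, by omega⟩
  · rw [hlt n a b hb, MvPowerSeries.coeff_monomial_mul, if_neg (by simp [m3_le_m3]; omega)]
  · rw [hsucc, show m3 (n + 1) a (b + k) = m3 1 0 k + m3 n a b by rw [m3_add_m3]; ring_nf,
      MvPowerSeries.coeff_add_monomial_mul, one_mul]

end Monomials

def pathsIn (s : Set (List (ℤ × ℤ))) (n a b : ℕ) : Set (List (ℤ × ℤ)) :=
  {p | IsPath S3 n p ∧ p ∈ s ∧ dr p = a ∧ hr p = b}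

/-- `R̄_L` for `L` the set of Schröder paths lying in `s`. -/
noncomputable def pathGF (s : Set (List (ℤ × ℤ))) : MvPowerSeries (Fin 3) ℚ :=
  fun d => ((pathsIn s (d 0) (d 1) (d 2)).ncard : ℚ)

section PathGF

variable {s t : Set (List (ℤ × ℤ))}

lemma coeff_pathGF (s : Set (List (ℤ × ℤ))) (n a b : ℕ) :
    MvPowerSeries.coeff (m3 n a b) (pathGF s) = (pathsIn s n a b).ncard := by
  rw [MvPowerSeries.coeff_apply, pathGF, m3_apply_zero, m3_apply_one, m3_apply_two]

lemma eq_pathGF {R : MvPowerSeries (Fin 3) ℚ}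
    (h : ∀ n a b, MvPowerSeries.coeff (m3 n a b) R = (pathsIn s n a b).ncard) :
    R = pathGF s := by
  ext d
  rw [← m3_eval d, h, coeff_pathGF]

lemma pathGF_congr (h : ∀ n p, IsPath S3 n p → (p ∈ s ↔ p ∈ t)) : pathGF s = pathGF t := by
  refine eq_pathGF fun n a b => ?_
  have hpaths : pathsIn s n a b = pathsIn t n a b := by
    ext p
    constructor <;> rintro ⟨hp, hs, hdr, hhr⟩
    · exact ⟨hp, (h n p hp).1 hs, hdr, hhr⟩
    · exact ⟨hp, (h n p hp).2 hs, hdr, hhr⟩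
  rw [coeff_pathGF, hpaths]

lemma pathGF_union (hst : Disjoint s t) : pathGF (s ∪ t) = pathGF s + pathGF t := by
  refine (eq_pathGF fun n a b => ?_).symm
  have hfin (u : Set (List (ℤ × ℤ))) : (pathsIn u n a b).Finite :=
    (finite_setOf_isPath n).subset fun p hp => hp.1
  have hunion : pathsIn (s ∪ t) n a b = pathsIn s n a b ∪ pathsIn t n a b := by
    ext p
    simp only [pathsIn, Set.mem_union, Set.mem_ofPred_eq]
    tauto
  have hdisj : Disjoint (pathsIn s n a b) (pathsIn t n a b) :=
    hst.mono (fun p hp => hp.2.1) (fun p hp => hp.2.1)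
  rw [map_add, coeff_pathGF, coeff_pathGF, hunion, Set.ncard_union_eq hdisj (hfin s) (hfin t),
    Nat.cast_add]

lemma pathGF_image {f : List (ℤ × ℤ) → List (ℤ × ℤ)} (hf : f.Injective) (k : ℕ)
    (hzero : ∀ q, ¬IsPath S3 0 (f q)) (hsucc : ∀ n q, IsPath S3 (n + 1) (f q) ↔ IsPath S3 n q)
    (hdr : ∀ q ∈ s, dr (f q) = dr q) (hhr : ∀ q ∈ s, hr (f q) = hr q + k) :
    pathGF (f '' s) = Xv * Zv ^ k * pathGF s := by
  refine eq_Xv_mul_Zv_pow_mul k (fun a b => ?_) (fun n a b hb => ?_) (fun n a b => ?_)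
  · have hempty : pathsIn (f '' s) 0 a b = ∅ := by
      refine Set.eq_empty_of_forall_notMem ?_
      rintro _ ⟨hp, ⟨q, -, rfl⟩, -⟩
      exact hzero q hp
    rw [coeff_pathGF, hempty, Set.ncard_empty, Nat.cast_zero]
  · have hempty : pathsIn (f '' s) (n + 1) a b = ∅ := by
      refine Set.eq_empty_of_forall_notMem ?_
      rintro _ ⟨-, ⟨q, hq, rfl⟩, -, rfl⟩
      have := hhr q hq
      omega
    rw [coeff_pathGF, hempty, Set.ncard_empty, Nat.cast_zero]
  · have himage : pathsIn (f '' s) (n + 1) a (b + k) = f '' pathsIn s n a b := by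
      ext p
      constructor
      · rintro ⟨hp, ⟨q, hq, rfl⟩, hdrp, hhrp⟩
        exact ⟨q, ⟨(hsucc n q).1 hp, hq, (hdr q hq).symm.trans hdrp,
          by have := hhr q hq; omega⟩, rfl⟩
      · rintro ⟨q, ⟨hp, hq, hdrq, hhrq⟩, rfl⟩
        exact ⟨(hsucc n q).2 hp, Set.mem_image_of_mem f hq, (hdr q hq).trans hdrq,
          by rw [hhr q hq, hhrq]⟩
    rw [coeff_pathGF, coeff_pathGF, himage, Set.ncard_image_of_injective _ hf]

end PathGF

def withEnds (h l : ℤ × ℤ) : Set (List (ℤ × ℤ)) :=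
  {p | U ∈ p ∧ p.head? = some h ∧ p.getLast? = some l}

section WithEnds

lemma U_ne_Hstep : U ≠ Hstep := by decide

lemma D_ne_Hstep : D ≠ Hstep := by decide

lemma disjoint_withEnds_of_ne_left {h h' l l' : ℤ × ℤ} (hne : h ≠ h') :
    Disjoint (withEnds h l) (withEnds h' l') :=
  Set.disjoint_left.2 fun _ ⟨_, hp, _⟩ ⟨_, hp', _⟩ =>
    hne (Option.some_injective _ (hp.symm.trans hp'))

lemma disjoint_withEnds_of_ne_right {h h' l l' : ℤ × ℤ} (hne : l ≠ l') :
    Disjoint (withEnds h l) (withEnds h' l') :=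
  Set.disjoint_left.2 fun _ ⟨_, _, hp⟩ ⟨_, _, hp'⟩ =>
    hne (Option.some_injective _ (hp.symm.trans hp'))

variable {n : ℕ} {p : List (ℤ × ℤ)}

lemma U_mem_iff_mem_withEnds_of_isPath (hp : IsPath S3 n p) :
    U ∈ p ↔ p ∈ withEnds U D ∪ withEnds Hstep D ∪ withEnds U Hstep ∪ withEnds Hstep Hstep := by
  refine ⟨fun hU => ?_, by rintro (((⟨hU, -⟩ | ⟨hU, -⟩) | ⟨hU, -⟩) | ⟨hU, -⟩) <;> exact hU⟩
  have hne := List.ne_nil_of_mem hU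
  rcases hp.head?_eq hne with hh | hh <;> rcases hp.getLast?_eq hne with hl | hl
  · exact .inl (.inl (.inl ⟨hU, hh, hl⟩))
  · exact .inl (.inr ⟨hU, hh, hl⟩)
  · exact .inl (.inl (.inr ⟨hU, hh, hl⟩))
  · exact .inr ⟨hU, hh, hl⟩

lemma mem_withEnds_H_left_iff_of_isPath (hp : IsPath S3 n p) (l : ℤ × ℤ) :
    p ∈ withEnds Hstep l ↔
      p ∈ (Hstep :: ·) '' withEnds U l ∪ (Hstep :: ·) '' withEnds Hstep l := by
  constructor
  · rintro ⟨hU, hhead, hlast⟩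
    obtain ⟨q, rfl⟩ := List.head?_eq_some_iff.1 hhead
    have hUq : U ∈ q := (List.mem_cons.1 hU).resolve_left U_ne_Hstep
    have hq := List.ne_nil_of_mem hUq
    obtain ⟨m, rfl⟩ : ∃ m, n = m + 1 :=
      Nat.exists_eq_succ_of_ne_zero (by rintro rfl; exact List.cons_ne_nil _ _ hp.eq_nil_of_zero)
    rw [List.getLast?_cons_of_ne_nil hq] at hlast
    rcases (isPath_cons_H_iff.1 hp).head?_eq hq with hh | hh
    · exact .inl ⟨q, ⟨hUq, hh, hlast⟩, rfl⟩
    · exact .inr ⟨q, ⟨hUq, hh, hlast⟩, rfl⟩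
  · rintro (⟨q, ⟨hUq, -, hlast⟩, rfl⟩ | ⟨q, ⟨hUq, -, hlast⟩, rfl⟩) <;>
      exact ⟨List.mem_cons_of_mem _ hUq, rfl,
        by rwa [List.getLast?_cons_of_ne_nil (List.ne_nil_of_mem hUq)]⟩

lemma mem_withEnds_U_H_iff_of_isPath (hp : IsPath S3 n p) :
    p ∈ withEnds U Hstep ↔
      p ∈ (· ++ [Hstep]) '' withEnds U D ∪ (· ++ [Hstep]) '' withEnds U Hstep := by
  constructor
  · rintro ⟨hU, hhead, hlast⟩
    obtain ⟨q, rfl⟩ := List.getLast?_eq_some_iff.1 hlast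
    have hUq : U ∈ q := (List.mem_append.1 hU).resolve_right (by simp [U_ne_Hstep])
    have hq := List.ne_nil_of_mem hUq
    obtain ⟨m, rfl⟩ : ∃ m, n = m + 1 :=
      Nat.exists_eq_succ_of_ne_zero (by rintro rfl; simpa using hp.eq_nil_of_zero)
    rw [List.head?_append_of_ne_nil _ hq] at hhead
    rcases (isPath_append_H_iff.1 hp).getLast?_eq hq with hl | hl
    · exact .inl ⟨q, ⟨hUq, hhead, hl⟩, rfl⟩
    · exact .inr ⟨q, ⟨hUq, hhead, hl⟩, rfl⟩
  · rintro (⟨q, ⟨hUq, hhead, -⟩, rfl⟩ | ⟨q, ⟨hUq, hhead, -⟩, rfl⟩) <;>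
      exact ⟨List.mem_append_left _ hUq,
        by rwa [List.head?_append_of_ne_nil _ (List.ne_nil_of_mem hUq)], List.getLast?_concat⟩

end WithEnds

lemma pathGF_U_mem_eq_sum_withEnds :
    pathGF {p | U ∈ p} = pathGF (withEnds U D) + pathGF (withEnds Hstep D)
      + pathGF (withEnds U Hstep) + pathGF (withEnds Hstep Hstep) := by
  have hUH := U_ne_Hstep
  have hDH := D_ne_Hstep
  rw [pathGF_congr (s := {p | U ∈ p}) fun _ _ hp => U_mem_iff_mem_withEnds_of_isPath hp,
    pathGF_union, pathGF_union, pathGF_union]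
  · exact disjoint_withEnds_of_ne_left hUH
  · exact Set.disjoint_union_left.2
      ⟨disjoint_withEnds_of_ne_right hDH, disjoint_withEnds_of_ne_left hUH.symm⟩
  · exact Set.disjoint_union_left.2 ⟨Set.disjoint_union_left.2
      ⟨disjoint_withEnds_of_ne_left hUH, disjoint_withEnds_of_ne_right hDH⟩,
      disjoint_withEnds_of_ne_left hUH⟩

lemma Apoly_mul_pathGF_withEnds_H_left (l : ℤ × ℤ) :
    Apoly * pathGF (withEnds Hstep l) = Xv * pathGF (withEnds U l) := by
  have hzero (q : List (ℤ × ℤ)) : ¬IsPath S3 0 (Hstep :: q) :=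
    fun hp => List.cons_ne_nil _ _ hp.eq_nil_of_zero
  have hsplit : pathGF (withEnds Hstep l)
      = pathGF ((Hstep :: ·) '' withEnds U l ∪ (Hstep :: ·) '' withEnds Hstep l) :=
    pathGF_congr fun _ _ hp => mem_withEnds_H_left_iff_of_isPath hp l
  rw [pathGF_union ((Set.disjoint_image_iff List.cons_injective).2
      (disjoint_withEnds_of_ne_left U_ne_Hstep)),
    pathGF_image List.cons_injective 0 hzero (fun _ _ => isPath_cons_H_iff)
      (fun q _ => dr_cons_H q)
      (fun q hq => by rw [hr_cons_H, hq.2.1, if_neg (by simp [U_ne_Hstep])]),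
    pathGF_image List.cons_injective 1 hzero (fun _ _ => isPath_cons_H_iff)
      (fun q _ => dr_cons_H q) (fun q hq => by rw [hr_cons_H, hq.2.1, if_pos rfl])] at hsplit
  rw [Apoly]
  linear_combination hsplit

lemma Apoly_mul_pathGF_withEnds_U_H :
    Apoly * pathGF (withEnds U Hstep) = Xv * pathGF (withEnds U D) := by
  have hzero (q : List (ℤ × ℤ)) : ¬IsPath S3 0 (q ++ [Hstep]) :=
    fun hp => by simpa using hp.eq_nil_of_zero
  have hinj := List.append_left_injective [Hstep]
  have hsplit : pathGF (withEnds U Hstep)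
      = pathGF ((· ++ [Hstep]) '' withEnds U D ∪ (· ++ [Hstep]) '' withEnds U Hstep) :=
    pathGF_congr fun _ _ hp => mem_withEnds_U_H_iff_of_isPath hp
  rw [pathGF_union ((Set.disjoint_image_iff hinj).2 (disjoint_withEnds_of_ne_right D_ne_Hstep)),
    pathGF_image hinj 0 hzero (fun _ _ => isPath_append_H_iff) (fun q _ => dr_append_H q)
      (fun q hq => by rw [hr_append_H, hq.2.2, if_neg (by simp [D_ne_Hstep])]),
    pathGF_image hinj 1 hzero (fun _ _ => isPath_append_H_iff) (fun q _ => dr_append_H q)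
      (fun q hq => by rw [hr_append_H, hq.2.2, if_pos rfl])] at hsplit
  rw [Apoly]
  linear_combination hsplit

lemma isUnit_Apoly : IsUnit Apoly := by
  simp [MvPowerSeries.isUnit_iff_constantCoeff, Apoly, Xv, Zv]

lemma eq_pathGF_withEnds {R : MvPowerSeries (Fin 3) ℚ} {h l : ℤ × ℤ}
    (hR : ∀ n a b : ℕ, MvPowerSeries.coeff (m3 n a b) R =
      (Nat.card {p : List (ℤ × ℤ) //
        IsPath S3 n p ∧ U ∈ p ∧ p.head? = some h ∧ p.getLast? = some l ∧
        dr p = a ∧ hr p = b} : ℚ)) :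
    R = pathGF (withEnds h l) :=
  eq_pathGF fun n a b => by
    rw [hR, ← Nat.card_coe_set_eq]
    simp only [pathsIn, withEnds, Set.mem_ofPred_eq, and_assoc]
    rfl

/-- part of Lemma 3.1:
`(1−xz+x)²·R̄_{U2} = x(1−xz)·R̄_{UL_{S3}}` and
`(1−xz+x)²·R̄_{U3} = x(1−xz)·R̄_{UL_{S3}}`, where `U2` (resp. `U3`) consists of the
Schröder paths with at least one U step starting with H and ending with D
(resp. starting with U and ending with H). -/
theorem lemma_U2_U3 (R2 R3 Rall : MvPowerSeries (Fin 3) ℚ)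
    (hR2 : ∀ n a b : ℕ, MvPowerSeries.coeff (m3 n a b) R2 =
      (Nat.card {p : List (ℤ × ℤ) //
        IsPath S3 n p ∧ U ∈ p ∧ p.head? = some Hstep ∧ p.getLast? = some D ∧
        dr p = a ∧ hr p = b} : ℚ))
    (hR3 : ∀ n a b : ℕ, MvPowerSeries.coeff (m3 n a b) R3 =
      (Nat.card {p : List (ℤ × ℤ) //
        IsPath S3 n p ∧ U ∈ p ∧ p.head? = some U ∧ p.getLast? = some Hstep ∧
        dr p = a ∧ hr p = b} : ℚ))
    (hRall : ∀ n a b : ℕ, MvPowerSeries.coeff (m3 n a b) Rall =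
      (Nat.card {p : List (ℤ × ℤ) //
        IsPath S3 n p ∧ U ∈ p ∧ dr p = a ∧ hr p = b} : ℚ)) :
    Cpoly ^ 2 * R2 = Xv * Apoly * Rall ∧ Cpoly ^ 2 * R3 = Xv * Apoly * Rall := by
  obtain rfl := eq_pathGF_withEnds hR2
  obtain rfl := eq_pathGF_withEnds hR3
  obtain rfl : Rall = pathGF {p | U ∈ p} := eq_pathGF hRall
  have hR23 : pathGF (withEnds Hstep D) = pathGF (withEnds U Hstep) :=
    isUnit_Apoly.mul_left_cancel
      ((Apoly_mul_pathGF_withEnds_H_left D).trans Apoly_mul_pathGF_withEnds_U_H.symm)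
  have hC2 : Cpoly ^ 2 * pathGF (withEnds Hstep D) = Xv * Apoly * pathGF {p | U ∈ p} := by
    rw [pathGF_U_mem_eq_sum_withEnds, show Cpoly = Apoly + Xv by rw [Cpoly, Apoly]]
    linear_combination Apoly * Apoly_mul_pathGF_withEnds_H_left D
      - Xv * Apoly_mul_pathGF_withEnds_H_left Hstep + (Xv ^ 2 + Xv * Apoly) * hR23
  exact ⟨hC2, hR23 ▸ hC2⟩
end

section
/- With R̄_L(x,y,z) = R_L(x,y,z) − 1, one has the identity of formal power series (1−xz+x)² · R̄_{U4}(x,y,z) = x² · R̄_{UL_{S3}}(x,y,z), where U4 is the set of Schröder paths with at least one U step that both start and end with an H step. -/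
/-!
Removing a leading (trailing) `H` step is a bijection from the paths with a `U` step that start
(end) with `H` onto all paths with a `U` step of one order less, and it lowers `hr` by one exactly
when the new first (last) step is again `H`. Writing `F_HH, F_HN, F_NH, F_NN` for the generating
functions of these paths sorted by whether the first and the last step is `H`, this gives
`(1 - xz) F_HH = x F_HN = x F_NH` and `(1 - xz) F_HN = x F_NN`; expanding `(1 - xz + x)² F_HH`
with these relations yields `x² (F_HH + F_HN + F_NH + F_NN)`.
-/

open MvPowerSeries

section GenSeries

variable {α β σ : Type*}

-- `ncard` is `0` on infinite sets, hence the finiteness hypotheses below.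
noncomputable def genSeries (w : α → σ →₀ ℕ) (s : Set α) : MvPowerSeries σ ℚ :=
  fun d => ({x ∈ s | w x = d}.ncard : ℚ)

variable {w : α → σ →₀ ℕ} {v : β → σ →₀ ℕ}

theorem coeff_genSeries (s : Set α) (d : σ →₀ ℕ) :
    coeff d (genSeries w s) = ({x ∈ s | w x = d}.ncard : ℚ) :=
  rfl

theorem genSeries_union {s t : Set α} (hst : Disjoint s t)
    (hs : ∀ d, {x ∈ s | w x = d}.Finite) (ht : ∀ d, {x ∈ t | w x = d}.Finite) :
    genSeries w (s ∪ t) = genSeries w s + genSeries w t := by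
  ext d
  have hsep : {x ∈ s ∪ t | w x = d} = {x ∈ s | w x = d} ∪ {x ∈ t | w x = d} :=
    Set.sep_union
  rw [map_add, coeff_genSeries, coeff_genSeries, coeff_genSeries, hsep, Set.ncard_union_eq
    (hst.mono (Set.sep_subset _ _) (Set.sep_subset _ _)) (hs d) (ht d), Nat.cast_add]

theorem genSeries_sep_add_sep_not {s : Set α} (hs : ∀ d, {x ∈ s | w x = d}.Finite)
    (R : α → Prop) :
    genSeries w {x ∈ s | R x} + genSeries w {x ∈ s | ¬R x} = genSeries w s := by
  rw [← genSeries_union, ← Set.sep_or]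
  · simp only [em, Set.sep_true]
  · exact Set.disjoint_left.mpr fun x hx hx' => hx'.2 hx.2
  · exact fun d => (hs d).subset fun x hx => ⟨hx.1.1, hx.2⟩
  · exact fun d => (hs d).subset fun x hx => ⟨hx.1.1, hx.2⟩

theorem genSeries_image {f : α → β} (hf : Function.Injective f) {s : Set α} {e : σ →₀ ℕ}
    (hw : ∀ x ∈ s, v (f x) = w x + e) :
    genSeries v (f '' s) = monomial e 1 * genSeries w s := by
  ext d
  have himage : {y ∈ f '' s | v y = d} = f '' {x ∈ s | w x + e = d} := by
    ext y
    constructor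
    · rintro ⟨⟨x, hx, rfl⟩, hd⟩
      exact ⟨x, ⟨hx, hw x hx ▸ hd⟩, rfl⟩
    · rintro ⟨x, ⟨hx, hd⟩, rfl⟩
      exact ⟨⟨x, hx, rfl⟩, hw x hx ▸ hd⟩
  rw [coeff_monomial_mul, coeff_genSeries, coeff_genSeries, himage,
    Set.ncard_image_of_injective _ hf, one_mul]
  split_ifs with hed
  · simp_rw [← eq_tsub_iff_add_eq_of_le hed]
  · have hempty : {x ∈ s | w x + e = d} = ∅ :=
      Set.eq_empty_of_forall_notMem fun x hx => hed (hx.2 ▸ le_add_self)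
    rw [hempty, Set.ncard_empty, Nat.cast_zero]

theorem genSeries_image_eq_add {f : α → β} (hf : Function.Injective f) {s : Set α}
    (R : α → Prop) [DecidablePred R] {e₁ e₂ : σ →₀ ℕ}
    (hw : ∀ x ∈ s, v (f x) = w x + if R x then e₁ else e₂)
    (hfs : ∀ d, {y ∈ f '' s | v y = d}.Finite) :
    genSeries v (f '' s) =
      monomial e₁ 1 * genSeries w {x ∈ s | R x} +
        monomial e₂ 1 * genSeries w {x ∈ s | ¬R x} := by
  have hsplit : f '' s = f '' {x ∈ s | R x} ∪ f '' {x ∈ s | ¬R x} := by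
    rw [← Set.image_union, ← Set.sep_or]
    simp only [em, Set.sep_true]
  have hdisj : Disjoint {x ∈ s | R x} {x ∈ s | ¬R x} :=
    Set.disjoint_left.mpr fun x hx hx' => hx'.2 hx.2
  have hfin (t : Set α) (ht : t ⊆ s) (d) : {y ∈ f '' t | v y = d}.Finite :=
    (hfs d).subset fun y hy => ⟨Set.image_mono ht hy.1, hy.2⟩
  rw [hsplit, genSeries_union ((Set.disjoint_image_iff hf).mpr hdisj)
      (hfin _ (Set.sep_subset _ _)) (hfin _ (Set.sep_subset _ _)),
    genSeries_image hf fun x hx => by rw [hw x hx.1, if_pos hx.2],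
    genSeries_image hf fun x hx => by rw [hw x hx.1, if_neg hx.2]]

end GenSeries

theorem m3_succ (n a b c : ℕ) : m3 (n + 1) a (b + c) = m3 n a b + m3 1 0 c := by
  simp only [m3, Finsupp.single_add, Finsupp.single_zero]
  abel

theorem m3_inj {n a b n' a' b' : ℕ} :
    m3 n a b = m3 n' a' b' ↔ n = n' ∧ a = a' ∧ b = b' := by
  refine ⟨fun h => ⟨?_, ?_, ?_⟩, fun ⟨h1, h2, h3⟩ => h1 ▸ h2 ▸ h3 ▸ rfl⟩
  · simpa [m3] using DFunLike.congr_fun h 0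
  · simpa [m3] using DFunLike.congr_fun h 1
  · simpa [m3] using DFunLike.congr_fun h 2

theorem exists_eq_m3 (d : Fin 3 →₀ ℕ) : ∃ n a b, d = m3 n a b :=
  ⟨d 0, d 1, d 2, by ext i; fin_cases i <;> simp [m3]⟩

theorem ext_m3 {F G : MvPowerSeries (Fin 3) ℚ}
    (h : ∀ n a b, coeff (m3 n a b) F = coeff (m3 n a b) G) :
    F = G :=
  MvPowerSeries.ext fun d => by
    obtain ⟨n, a, b, rfl⟩ := exists_eq_m3 d
    exact h n a b

theorem monomial_m3_eq_X_mul_Z : (monomial (m3 1 0 1) 1 : MvPowerSeries (Fin 3) ℚ) = Xv * Zv := by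
  simp [m3, Xv, Zv, MvPowerSeries.X_def, MvPowerSeries.monomial_mul_monomial]

theorem monomial_m3_eq_X : (monomial (m3 1 0 0) 1 : MvPowerSeries (Fin 3) ℚ) = Xv := by
  simp [m3, Xv, MvPowerSeries.X_def]

namespace List

theorem forall_prefix_cons {α : Type*} {a : α} {l : List α} {P : List α → Prop} :
    (∀ q, q <+: a :: l → P q) ↔ P [] ∧ ∀ q, q <+: l → P (a :: q) := by
  simp only [prefix_cons_iff, or_imp, forall_and, forall_eq, forall_exists_index, and_imp]
  exact and_congr_right fun _ => ⟨fun h q hq => h _ q rfl hq, fun h _ q hq => hq ▸ h q⟩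

theorem forall_prefix_concat {α : Type*} {a : α} {l : List α} {P : List α → Prop} :
    (∀ q, q <+: l ++ [a] → P q) ↔ P (l ++ [a]) ∧ ∀ q, q <+: l → P q := by
  simp only [prefix_concat_iff, or_imp, forall_and, forall_eq]

theorem zip_tail_append_singleton_s6 {α : Type*} (l : List α) (x : α) :
    (l ++ [x]).zip (l ++ [x]).tail = l.zip l.tail ++ (l.getLast?.map fun y => (y, x)).toList := by
  induction l with
  | nil => rfl
  | cons a t ih =>
    cases t with
    | nil => rfl
    | cons b t => simpa using ih

end List

namespace SchroderPath

def H : ℤ × ℤ := (2, 0)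

theorem H_mem_S3 : H ∈ S3 := by simp [S3, H]

theorem U_ne_H : U ≠ H := by simp [U, H]

theorem isPath_cons_H_iff {n : ℕ} {p : List (ℤ × ℤ)} :
    IsPath S3 (n + 1) (H :: p) ↔ IsPath S3 n p := by
  simp only [IsPath, List.forall_mem_cons, List.forall_prefix_cons, H_mem_S3, true_and]
  simp only [List.map_cons, List.sum_cons, List.map_nil, List.sum_nil, H, le_refl, zero_add,
    true_and]
  exact and_congr_right fun _ => and_congr_left fun _ => by push_cast; omega

theorem isPath_append_H_iff {n : ℕ} {p : List (ℤ × ℤ)} :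
    IsPath S3 (n + 1) (p ++ [H]) ↔ IsPath S3 n p := by
  simp only [IsPath, List.forall_mem_append, List.forall_mem_singleton, List.forall_prefix_concat,
    H_mem_S3, and_true]
  simp only [List.map_append, List.map_cons, List.map_nil, List.sum_append, List.sum_cons,
    List.sum_nil, H, add_zero]
  refine and_congr_right fun _ =>
    ⟨fun ⟨h1, h2, _, h4⟩ => ⟨?_, h2, h4⟩, fun ⟨h1, h2, h4⟩ => ⟨?_, h2, h2.ge, h4⟩⟩ <;>
    push_cast at h1 ⊢ <;> omega

theorem dr_cons_H (p : List (ℤ × ℤ)) : dr (H :: p) = dr p := by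
  cases p <;> simp [dr, H]

theorem hr_cons_H (p : List (ℤ × ℤ)) :
    hr (H :: p) = hr p + if p.head? = some H then 1 else 0 := by
  cases p with
  | nil => simp [hr]
  | cons y t =>
    by_cases hy : y = H
    · subst hy; simp [hr, H]
    · simp [hr, hy, Ne.symm hy]

theorem dr_append_H (p : List (ℤ × ℤ)) : dr (p ++ [H]) = dr p := by
  unfold dr
  rw [List.zip_tail_append_singleton_s6, List.countP_append]
  rcases p.getLast? with _ | y
  · simp
  · by_cases hy : y = H
    · subst hy; simp [H]
    · simp [hy]

theorem hr_append_H (p : List (ℤ × ℤ)) :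
    hr (p ++ [H]) = hr p + if p.getLast? = some H then 1 else 0 := by
  unfold hr
  rw [List.zip_tail_append_singleton_s6, List.countP_append]
  rcases p.getLast? with _ | y
  · simp
  · by_cases hy : y = H
    · subst hy; simp [H]
    · simp [hy]

theorem _root_.IsPath.length_le_s6 {S : Set (ℤ × ℤ)} {n : ℕ} {p : List (ℤ × ℤ)}
    (hS : ∀ s ∈ S, 1 ≤ s.1) (h : IsPath S n p) : p.length ≤ 2 * n := by
  have := List.card_nsmul_le_sum (p.map Prod.fst) 1 (by simpa using fun s hs => hS s (h.1 s hs))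
  rw [h.2.1, List.length_map, nsmul_one] at this
  exact_mod_cast this

theorem one_le_fst_of_mem_S3 : ∀ s ∈ S3, 1 ≤ s.1 := by
  simp [S3]

theorem finite_setOf_isPath (n : ℕ) : {p | IsPath S3 n p}.Finite := by
  have : Finite S3 := Set.toFinite ({(1, 1), (1, -1), (2, 0)} : Set (ℤ × ℤ))
  refine ((List.finite_length_le S3 (2 * n)).image (List.map Subtype.val)).subset fun p hp => ?_
  change IsPath S3 n p at hp
  have hlen := hp.length_le_s6 one_le_fst_of_mem_S3
  lift p to List S3 using hp.1
  exact ⟨p, by simpa using hlen, rfl⟩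

def order (p : List (ℤ × ℤ)) : ℕ := ((p.map Prod.fst).sum / 2).toNat

theorem _root_.IsPath.order_eq {S : Set (ℤ × ℤ)} {n : ℕ} {p : List (ℤ × ℤ)}
    (h : IsPath S n p) :
    order p = n := by
  simp [order, h.2.1]

noncomputable def weight (p : List (ℤ × ℤ)) : Fin 3 →₀ ℕ := m3 (order p) (dr p) (hr p)

def UL : Set (List (ℤ × ℤ)) := {p | (∃ n, IsPath S3 n p) ∧ U ∈ p}

theorem weight_cons_H {p : List (ℤ × ℤ)} (hp : ∃ n, IsPath S3 n p) :
    weight (H :: p) = weight p + if p.head? = some H then m3 1 0 1 else m3 1 0 0 := by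
  obtain ⟨n, hp⟩ := hp
  rw [weight, weight, (isPath_cons_H_iff.mpr hp).order_eq, hp.order_eq, dr_cons_H, hr_cons_H,
    m3_succ, apply_ite (m3 1 0)]

theorem weight_append_H {p : List (ℤ × ℤ)} (hp : ∃ n, IsPath S3 n p) :
    weight (p ++ [H]) = weight p + if p.getLast? = some H then m3 1 0 1 else m3 1 0 0 := by
  obtain ⟨n, hp⟩ := hp
  rw [weight, weight, (isPath_append_H_iff.mpr hp).order_eq, hp.order_eq, dr_append_H,
    hr_append_H, m3_succ, apply_ite (m3 1 0)]

theorem finite_weight_fiber (d : Fin 3 →₀ ℕ) : {p ∈ UL | weight p = d}.Finite := by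
  obtain ⟨n, a, b, rfl⟩ := exists_eq_m3 d
  refine (finite_setOf_isPath n).subset ?_
  rintro p ⟨⟨⟨k, hk⟩, -⟩, hw⟩
  obtain rfl : k = n := hk.order_eq ▸ (m3_inj.mp hw).1
  exact hk

theorem exists_succ_of_isPath_of_mem {n : ℕ} {p : List (ℤ × ℤ)} (hp : IsPath S3 n p)
    (hU : U ∈ p) :
    ∃ m, n = m + 1 :=
  Nat.exists_eq_add_one.mpr <| by
    have := hp.length_le_s6 one_le_fst_of_mem_S3
    have := List.length_pos_of_mem hU
    omega

theorem image_cons_H {Q : List (ℤ × ℤ) → Prop} (hQ : ∀ p ≠ [], Q (H :: p) ↔ Q p) :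
    List.cons H '' {p ∈ UL | Q p} = {p ∈ UL | p.head? = some H ∧ Q p} := by
  ext q
  constructor
  · rintro ⟨p, ⟨⟨⟨n, hn⟩, hU⟩, hQp⟩, rfl⟩
    exact ⟨⟨⟨n + 1, isPath_cons_H_iff.mpr hn⟩, List.mem_cons_of_mem _ hU⟩, rfl,
      (hQ p (List.ne_nil_of_mem hU)).mpr hQp⟩
  · rintro ⟨⟨⟨n, hn⟩, hU⟩, hH, hQq⟩
    obtain ⟨p, rfl⟩ := List.head?_eq_some_iff.mp hH
    have hU' : U ∈ p := (List.mem_cons.mp hU).resolve_left U_ne_H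
    obtain ⟨m, rfl⟩ := exists_succ_of_isPath_of_mem hn hU
    exact ⟨p, ⟨⟨⟨m, isPath_cons_H_iff.mp hn⟩, hU'⟩, (hQ p (List.ne_nil_of_mem hU')).mp hQq⟩,
      rfl⟩

theorem image_append_H {Q : List (ℤ × ℤ) → Prop} (hQ : ∀ p ≠ [], Q (p ++ [H]) ↔ Q p) :
    (· ++ [H]) '' {p ∈ UL | Q p} = {p ∈ UL | Q p ∧ p.getLast? = some H} := by
  ext q
  constructor
  · rintro ⟨p, ⟨⟨⟨n, hn⟩, hU⟩, hQp⟩, rfl⟩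
    exact ⟨⟨⟨n + 1, isPath_append_H_iff.mpr hn⟩, List.mem_append_left _ hU⟩,
      (hQ p (List.ne_nil_of_mem hU)).mpr hQp, List.getLast?_concat⟩
  · rintro ⟨⟨⟨n, hn⟩, hU⟩, hQq, hH⟩
    obtain ⟨p, rfl⟩ := List.getLast?_eq_some_iff.mp hH
    have hU' : U ∈ p := by simpa [U_ne_H] using hU
    obtain ⟨m, rfl⟩ := exists_succ_of_isPath_of_mem hn hU
    exact ⟨p, ⟨⟨⟨m, isPath_append_H_iff.mp hn⟩, hU'⟩, (hQ p (List.ne_nil_of_mem hU')).mp hQq⟩,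
      rfl⟩

noncomputable def pathSeries (P : List (ℤ × ℤ) → Prop) : MvPowerSeries (Fin 3) ℚ :=
  genSeries weight {p ∈ UL | P p}

theorem coeff_pathSeries (P : List (ℤ × ℤ) → Prop) (n a b : ℕ) :
    coeff (m3 n a b) (pathSeries P) =
      Nat.card {p // IsPath S3 n p ∧ U ∈ p ∧ P p ∧ dr p = a ∧ hr p = b} := by
  rw [pathSeries, coeff_genSeries, ← Nat.card_coe_set_eq]
  congr 1
  refine Nat.card_congr (Equiv.subtypeEquivRight fun p => ⟨?_, ?_⟩)
  · rintro ⟨⟨⟨⟨k, hk⟩, hU⟩, hP⟩, hw⟩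
    obtain ⟨hkn, rfl, rfl⟩ := m3_inj.mp hw
    obtain rfl : k = n := hk.order_eq ▸ hkn
    exact ⟨hk, hU, hP, rfl, rfl⟩
  · rintro ⟨hn, hU, hP, rfl, rfl⟩
    exact ⟨⟨⟨⟨n, hn⟩, hU⟩, hP⟩, by rw [weight, hn.order_eq]⟩

theorem finite_pathSeries_fiber (P : List (ℤ × ℤ) → Prop) (d : Fin 3 →₀ ℕ) :
    {p ∈ {p ∈ UL | P p} | weight p = d}.Finite :=
  (finite_weight_fiber d).subset fun _ hp => ⟨hp.1.1, hp.2⟩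

theorem genSeries_sep_eq_pathSeries (P R : List (ℤ × ℤ) → Prop) :
    genSeries weight {x ∈ {p ∈ UL | P p} | R x} = pathSeries fun p => P p ∧ R p := by
  simp only [pathSeries, Set.sep_ofPred, and_assoc]

theorem pathSeries_and_add_and_not (P R : List (ℤ × ℤ) → Prop) :
    (pathSeries fun p => P p ∧ R p) + (pathSeries fun p => P p ∧ ¬R p) = pathSeries P := by
  rw [← genSeries_sep_eq_pathSeries, ← genSeries_sep_eq_pathSeries,
    genSeries_sep_add_sep_not (finite_pathSeries_fiber P)]
  rfl

theorem pathSeries_head_H {Q : List (ℤ × ℤ) → Prop} (hQ : ∀ p ≠ [], Q (H :: p) ↔ Q p) :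
    (pathSeries fun p => p.head? = some H ∧ Q p) =
      Xv * Zv * (pathSeries fun p => p.head? = some H ∧ Q p) +
        Xv * pathSeries fun p => p.head? ≠ some H ∧ Q p := by
  have := genSeries_image_eq_add List.cons_injective (fun p => p.head? = some H)
    (fun _ hp => weight_cons_H hp.1.1) (image_cons_H hQ ▸ finite_pathSeries_fiber _)
  rw [image_cons_H hQ, genSeries_sep_eq_pathSeries, genSeries_sep_eq_pathSeries,
    monomial_m3_eq_X_mul_Z, monomial_m3_eq_X] at this
  simpa only [pathSeries, and_comm] using this

theorem pathSeries_last_H {Q : List (ℤ × ℤ) → Prop}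
    (hQ : ∀ p ≠ [], Q (p ++ [H]) ↔ Q p) :
    (pathSeries fun p => Q p ∧ p.getLast? = some H) =
      Xv * Zv * (pathSeries fun p => Q p ∧ p.getLast? = some H) +
        Xv * pathSeries fun p => Q p ∧ p.getLast? ≠ some H := by
  have := genSeries_image_eq_add (List.append_left_injective [H]) (fun p => p.getLast? = some H)
    (fun _ hp => weight_append_H hp.1.1)
    (image_append_H hQ ▸ finite_pathSeries_fiber _)
  rw [image_append_H hQ, genSeries_sep_eq_pathSeries, genSeries_sep_eq_pathSeries,
    monomial_m3_eq_X_mul_Z, monomial_m3_eq_X] at this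
  simpa only [pathSeries] using this

end SchroderPath

open SchroderPath

/-- part of Lemma 3.1: `(1−xz+x)²·R̄_{U4} = x²·R̄_{UL_{S3}}`, where `U4` consists of Schröder paths with at least one U step starting and ending with an H step. -/
theorem lemma_U4 (Rsub Rall : MvPowerSeries (Fin 3) ℚ)
    (hRsub : ∀ n a b : ℕ, MvPowerSeries.coeff (m3 n a b) Rsub =
      (Nat.card {p : List (ℤ × ℤ) //
        IsPath S3 n p ∧ U ∈ p ∧ p.head? = some (2, 0) ∧ p.getLast? = some (2, 0) ∧ dr p = a ∧ hr p = b} : ℚ))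
    (hRall : ∀ n a b : ℕ, MvPowerSeries.coeff (m3 n a b) Rall =
      (Nat.card {p : List (ℤ × ℤ) //
        IsPath S3 n p ∧ U ∈ p ∧ dr p = a ∧ hr p = b} : ℚ)) :
    Cpoly ^ 2 * Rsub = Xv ^ 2 * Rall := by
  set HH := pathSeries fun p => p.head? = some H ∧ p.getLast? = some H
  set HN := pathSeries fun p => p.head? = some H ∧ p.getLast? ≠ some H
  set NH := pathSeries fun p => p.head? ≠ some H ∧ p.getLast? = some H
  set NN := pathSeries fun p => p.head? ≠ some H ∧ p.getLast? ≠ some H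
  have hsub : Rsub = HH := ext_m3 fun n a b => by
    rw [hRsub, coeff_pathSeries]
    simp only [and_assoc]
    rfl
  have hall : Rall = HH + HN + NH + NN := by
    have hsplit := pathSeries_and_add_and_not (fun _ => True) (fun p => p.head? = some H)
    simp only [true_and] at hsplit
    rw [add_assoc, pathSeries_and_add_and_not, pathSeries_and_add_and_not, hsplit]
    refine ext_m3 fun n a b => ?_
    rw [hRall, coeff_pathSeries]
    simp only [true_and]
  have hLast_H : HH = Xv * Zv * HH + Xv * HN :=
    pathSeries_last_H fun p hp => by rw [List.head?_append_of_ne_nil _ hp]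
  have hHead_H : HH = Xv * Zv * HH + Xv * NH :=
    pathSeries_head_H fun p hp => by rw [List.getLast?_cons_of_ne_nil hp]
  have hHead_N : HN = Xv * Zv * HN + Xv * NN :=
    pathSeries_head_H fun p hp => by rw [List.getLast?_cons_of_ne_nil hp]
  rw [hsub, hall, Cpoly]
  linear_combination (1 - Xv * Zv + Xv) * hLast_H + Xv * hHead_H + Xv * hHead_N
end
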